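/- arXiv:2103.16075 — 2 statements merged into one kernel-verified Lean document; each statement's English description precedes it below -/
import Mathlib

section
/- Let ρ be the standard normal density with CDF Φ, and let ψ(x) = exp(-x²/(2α)) for α > 0. Then ∫_{-∞}^c Φ(t)/ψ(t) dt < ∞ and ∫_c^∞ (1-Φ(t))/ψ(t) dt < ∞ for all finite c if and only if α > 1. -/
/-!
Write `Q = 1 - Φ` (`gaussianTail`). As `ρ` and `ψ` are even, `Φ(t) / ψ(t) = Q(-t) / ψ(-t)`,
so both conditions say that `Q / ψ` is integrable on every `[c, ∞)`. For `t ≥ 1` the elementary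
bounds `t⁻¹ ρ(t + t⁻¹) ≤ Q(t) ≤ ρ(t) / t` trap `Q(t) / ψ(t)` between a multiple of `1 / t`
(when `α ≤ 1`) and `ρ(t) / ψ(t)`, a multiple of `exp (-(1 - α⁻¹) t² / 2)`: the former is not
integrable at `∞`, the latter is when `α > 1`.
-/

open MeasureTheory Real Set Filter Topology ProbabilityTheory Asymptotics
open scoped NNReal

lemma integrableOn_Iic_comp_neg_iff {E : Type*} [NormedAddCommGroup E] {f : ℝ → E} {c : ℝ} :
    IntegrableOn (fun t => f (-t)) (Iic c) ↔ IntegrableOn f (Ici (-c)) := by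
  rw [← (Measure.measurePreserving_neg (volume : Measure ℝ)).integrableOn_comp_preimage
    (Homeomorph.neg ℝ).measurableEmbedding]
  simp [Function.comp_def]

lemma gaussianPDFReal_zero_one (x : ℝ) :
    gaussianPDFReal 0 1 x = (√(2 * π))⁻¹ * exp (-x ^ 2 / 2) := by
  simp [gaussianPDFReal]

lemma gaussianPDFReal_zero_neg (v : ℝ≥0) (x : ℝ) :
    gaussianPDFReal 0 v (-x) = gaussianPDFReal 0 v x := by
  simp [gaussianPDFReal]

lemma hasDerivAt_gaussianPDFReal_zero_one (x : ℝ) :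
    HasDerivAt (gaussianPDFReal 0 1) (-x * gaussianPDFReal 0 1 x) x := by
  have h : HasDerivAt (fun y : ℝ => -y ^ 2 / 2) (-x) x :=
    ((hasDerivAt_pow 2 x).neg.div_const 2).congr_deriv (by push_cast; ring)
  rw [funext gaussianPDFReal_zero_one]
  exact (h.exp.const_mul _).congr_deriv (by ring)

lemma tendsto_gaussianPDFReal_zero_one_atTop :
    Tendsto (gaussianPDFReal 0 1) atTop (𝓝 0) := by
  simp_rw [funext gaussianPDFReal_zero_one]
  have h : Tendsto (fun x : ℝ => -x ^ 2 / 2) atTop atBot :=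
    (tendsto_neg_atTop_atBot.comp (tendsto_pow_atTop two_ne_zero)).atBot_div_const two_pos
  simpa using (tendsto_exp_atBot.comp h).const_mul (√(2 * π))⁻¹

noncomputable def gaussianTail (t : ℝ) : ℝ := ∫ s in Ioi t, gaussianPDFReal 0 1 s

lemma gaussianTail_nonneg (t : ℝ) : 0 ≤ gaussianTail t :=
  setIntegral_nonneg measurableSet_Ioi fun s _ => gaussianPDFReal_nonneg 0 1 s

lemma gaussianTail_antitone : Antitone gaussianTail := fun _ _ hab =>
  setIntegral_mono_set (integrable_gaussianPDFReal 0 1).integrableOn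
    (.of_forall (gaussianPDFReal_nonneg 0 1)) (Ioi_subset_Ioi hab).eventuallyLE

lemma integral_Iic_gaussianPDFReal_eq_one_sub_gaussianTail (t : ℝ) :
    ∫ s in Iic t, gaussianPDFReal 0 1 s = 1 - gaussianTail t := by
  rw [eq_sub_iff_add_eq, gaussianTail, intervalIntegral.integral_Iic_add_Ioi
    (integrable_gaussianPDFReal 0 1).integrableOn (integrable_gaussianPDFReal 0 1).integrableOn,
    integral_gaussianPDFReal_eq_one 0 one_ne_zero]

lemma integral_Iic_gaussianPDFReal_eq_gaussianTail_neg (t : ℝ) :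
    ∫ s in Iic t, gaussianPDFReal 0 1 s = gaussianTail (-t) := by
  rw [gaussianTail, ← integral_comp_neg_Iic]
  simp only [gaussianPDFReal_zero_neg]

lemma gaussianTail_le {t : ℝ} (ht : 0 < t) : gaussianTail t ≤ gaussianPDFReal 0 1 t / t := by
  have hderiv : ∀ x ∈ Ici t, HasDerivAt (fun s => -gaussianPDFReal 0 1 s)
      (x * gaussianPDFReal 0 1 x) x := fun x _ =>
    (hasDerivAt_gaussianPDFReal_zero_one x).neg.congr_deriv (by ring)
  have hpos : ∀ x ∈ Ioi t, 0 ≤ x * gaussianPDFReal 0 1 x := fun x hx =>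
    mul_nonneg (ht.trans hx).le (gaussianPDFReal_nonneg 0 1 x)
  have hlim : Tendsto (fun s => -gaussianPDFReal 0 1 s) atTop (𝓝 (-0)) :=
    tendsto_gaussianPDFReal_zero_one_atTop.neg
  -- `ρ(s) ≤ (s / t) ρ(s)` for `s > t`, and `s ρ(s) = -ρ'(s)` integrates explicitly
  calc gaussianTail t ≤ ∫ s in Ioi t, t⁻¹ * (s * gaussianPDFReal 0 1 s) := by
        refine setIntegral_mono_on (integrable_gaussianPDFReal 0 1).integrableOn
          ((integrableOn_Ioi_deriv_of_nonneg' hderiv hpos hlim).const_mul _) measurableSet_Ioi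
          fun s hs => ?_
        rw [← mul_assoc, ← div_eq_inv_mul]
        exact le_mul_of_one_le_left (gaussianPDFReal_nonneg 0 1 s)
          ((one_le_div ht).2 (le_of_lt hs))
    _ = gaussianPDFReal 0 1 t / t := by
        rw [integral_const_mul, integral_Ioi_of_hasDerivAt_of_nonneg' hderiv hpos hlim]
        simp [div_eq_inv_mul]

lemma sub_mul_gaussianPDFReal_le_gaussianTail {a b : ℝ} (ha : 0 ≤ a) (hab : a ≤ b) :
    (b - a) * gaussianPDFReal 0 1 b ≤ gaussianTail a := by
  have hmin : ∀ s ∈ Ioc a b, gaussianPDFReal 0 1 b ≤ gaussianPDFReal 0 1 s := fun s hs => by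
    simp only [gaussianPDFReal_zero_one]
    gcongr
    exacts [ha.trans hs.1.le, hs.2]
  calc (b - a) * gaussianPDFReal 0 1 b ≤ ∫ s in Ioc a b, gaussianPDFReal 0 1 s := by
        simpa [volume_real_Ioc_of_le hab] using setIntegral_ge_of_const_le measurableSet_Ioc
          measure_Ioc_lt_top.ne hmin (integrable_gaussianPDFReal 0 1).integrableOn
    _ ≤ gaussianTail a :=
        setIntegral_mono_set (integrable_gaussianPDFReal 0 1).integrableOn
          (.of_forall (gaussianPDFReal_nonneg 0 1)) Ioc_subset_Ioi_self.eventuallyLE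

lemma integrable_gaussianPDFReal_div_exp {α : ℝ} (hα : 1 < α) :
    Integrable fun t => gaussianPDFReal 0 1 t / exp (-t ^ 2 / (2 * α)) := by
  have hb : 0 < (1 - α⁻¹) / 2 := by
    have := inv_lt_one_of_one_lt₀ hα
    linarith
  refine ((integrable_exp_neg_mul_sq hb).const_mul (√(2 * π))⁻¹).congr (.of_forall fun t => ?_)
  dsimp only
  rw [gaussianPDFReal_zero_one, mul_div_assoc, ← exp_sub]
  congr 2
  field_simp
  ring

lemma integrableOn_Ici_gaussianTail_div_exp {α : ℝ} (hα : 1 < α) (c : ℝ) :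
    IntegrableOn (fun t => gaussianTail t / exp (-t ^ 2 / (2 * α))) (Ici c) := by
  have hloc : LocallyIntegrableOn (fun t => gaussianTail t * (exp (-t ^ 2 / (2 * α)))⁻¹)
      (Ici c) := gaussianTail_antitone.locallyIntegrable.locallyIntegrableOn _ |>.mul_continuousOn
    ((by fun_prop : Continuous fun t : ℝ => exp (-t ^ 2 / (2 * α))).continuousOn.inv₀
      fun t _ => (exp_pos _).ne') isClosed_Ici.isLocallyClosed
  refine hloc.integrableOn_of_isBigO_atTop ?_
    ((integrable_gaussianPDFReal_div_exp hα).integrableAtFilter _)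
  refine IsBigO.of_bound 1 (eventually_ge_atTop 1 |>.mono fun t ht => ?_)
  rw [one_mul, ← div_eq_mul_inv,
    norm_of_nonneg (div_nonneg (gaussianTail_nonneg t) (exp_pos _).le),
    norm_of_nonneg (div_nonneg (gaussianPDFReal_nonneg 0 1 t) (exp_pos _).le)]
  gcongr
  exact (gaussianTail_le (by linarith)).trans (div_le_self (gaussianPDFReal_nonneg 0 1 t) ht)

lemma not_integrableOn_Ioi_gaussianTail_div_exp {α : ℝ} (hα₀ : 0 < α) (hα : α ≤ 1) :
    ¬ IntegrableOn (fun t => gaussianTail t / exp (-t ^ 2 / (2 * α))) (Ioi 1) := by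
  set K := (√(2 * π))⁻¹ * exp (-3 / 2) with hK_def
  have hK : 0 < K := by positivity
  -- `Q(t) ≥ t⁻¹ ρ(t + t⁻¹)`, and `ρ(t + t⁻¹) / ψ(t) ≥ K` for `t ≥ 1` since `α ≤ 1`
  have hbound : ∀ t ∈ Ioi (1 : ℝ), K * t⁻¹ ≤ gaussianTail t / exp (-t ^ 2 / (2 * α)) := by
    intro t ht
    have ht₀ : 0 < t := zero_lt_one.trans ht
    have hexp : -3 / 2 ≤ -(t + t⁻¹) ^ 2 / 2 - -t ^ 2 / (2 * α) := by
      have h1 : t⁻¹ ≤ 1 := inv_le_one_of_one_le₀ ht.le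
      have h2 : t ^ 2 / 2 ≤ t ^ 2 / (2 * α) := by gcongr; linarith
      have h3 : (t + t⁻¹) ^ 2 ≤ t ^ 2 + 3 := by
        rw [add_sq, mul_assoc, mul_inv_cancel₀ ht₀.ne']
        nlinarith [inv_pos.2 ht₀]
      rw [neg_div (2 * α)]
      linarith
    calc K * t⁻¹ ≤ t⁻¹ * gaussianPDFReal 0 1 (t + t⁻¹) / exp (-t ^ 2 / (2 * α)) := by
          rw [gaussianPDFReal_zero_one, mul_comm K, hK_def, mul_div_assoc, mul_div_assoc,
            ← exp_sub]
          gcongr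
      _ ≤ gaussianTail t / exp (-t ^ 2 / (2 * α)) := by
          gcongr
          simpa using sub_mul_gaussianPDFReal_le_gaussianTail ht₀.le
            (le_add_of_nonneg_right (inv_nonneg.2 ht₀.le))
  intro hint
  have hKinv : IntegrableOn (fun t : ℝ => K * t⁻¹) (Ioi 1) :=
    hint.mono' (by fun_prop) ((ae_restrict_mem measurableSet_Ioi).mono fun t ht => by
      rw [norm_of_nonneg (mul_nonneg hK.le (inv_nonneg.2 (zero_lt_one.trans ht).le))]
      exact hbound t ht)
  exact not_integrableOn_Ioi_inv
    ((integrable_const_mul_iff (isUnit_iff_ne_zero.2 hK.ne') _).1 hKinv)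

theorem stmt3 (α : ℝ) (hα : 0 < α) (ρ Φ ψ : ℝ → ℝ)
    (hρ : ∀ x, ρ x = (Real.sqrt (2 * π))⁻¹ * Real.exp (-x ^ 2 / 2))
    (hΦ : ∀ x, Φ x = ∫ t in Iic x, ρ t)
    (hψ : ∀ x, ψ x = Real.exp (-x ^ 2 / (2 * α))) :
    (∀ c : ℝ, IntegrableOn (fun t => Φ t / ψ t) (Iic c) ∧
        IntegrableOn (fun t => (1 - Φ t) / ψ t) (Ici c)) ↔ 1 < α := by
  obtain rfl : ρ = gaussianPDFReal 0 1 := funext fun x => by rw [hρ, gaussianPDFReal_zero_one]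
  set g := fun t => gaussianTail t / exp (-t ^ 2 / (2 * α))
  have hlower : (fun t => Φ t / ψ t) = fun t => g (-t) := funext fun t => by
    rw [hΦ, integral_Iic_gaussianPDFReal_eq_gaussianTail_neg, hψ, ← neg_sq]
  have hupper : (fun t => (1 - Φ t) / ψ t) = g := funext fun t => by
    rw [hΦ, integral_Iic_gaussianPDFReal_eq_one_sub_gaussianTail, sub_sub_cancel, hψ]
  simp only [hlower, hupper, integrableOn_Iic_comp_neg_iff]
  constructor
  · intro h
    by_contra! hα₁
    exact not_integrableOn_Ioi_gaussianTail_div_exp hα hα₁ ((h 1).2.mono_set Ioi_subset_Ici_self)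
  · intro hα₁ c
    exact ⟨integrableOn_Ici_gaussianTail_div_exp hα₁ _, integrableOn_Ici_gaussianTail_div_exp hα₁ c⟩
end

section
/- Under the stronger condition, the norms on ℋ and 𝒲 are equivalent: for every f with ‖f‖_ℋ < ∞, ‖f‖²_𝒲 ≤ ‖f‖²_ℋ ≤ (1 + γ C(ρ,ψ)) ‖f‖²_𝒲. -/
/-!
Write `k x t = Φ t - 1[x ≤ t]`. Since `k x - k y = 1[y ≤ · < x]`, absolute continuity gives
`f x + K = ∫ f' (k x)` for some constant `K`, and weighted Cauchy–Schwarz bounds its square by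
`(∫ f'² ψ) · ∫ (k x)² / ψ`; the stronger condition is exactly what makes `(k x)² / ψ`
integrable. For fixed `t`, `x ↦ k x t` is a centred Bernoulli variable under `ρ` with variance
`Φ t (1 - Φ t)`, so by Tonelli `∫ ρ(x) ∫ (k x)² / ψ = C(ρ, ψ)`. Hence
`Var_ρ f ≤ ∫ (f + K)² ρ ≤ C(ρ, ψ) ∫ f'² ψ`, and both inequalities follow from this together
with `Var_ρ f ≥ 0`.
-/

open MeasureTheory Real Set

section CauchySchwarz

variable {α : Type*} [MeasurableSpace α] {μ : Measure α}

theorem sq_integral_mul_le_integral_sq_mul_integral_sq {u v : α → ℝ}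
    (hu : MemLp u 2 μ) (hv : MemLp v 2 μ) :
    (∫ a, u a * v a ∂μ) ^ 2 ≤ (∫ a, u a ^ 2 ∂μ) * ∫ a, v a ^ 2 ∂μ := by
  have inner_toLp : ∀ {w w' : α → ℝ} (hw : MemLp w 2 μ) (hw' : MemLp w' 2 μ),
      inner ℝ (hw.toLp w) (hw'.toLp w') = ∫ a, w a * w' a ∂μ := by
    intro w w' hw hw'
    rw [L2.inner_def]
    refine integral_congr_ae ?_
    filter_upwards [hw.coeFn_toLp, hw'.coeFn_toLp] with a ha ha'
    rw [ha, ha', RCLike.inner_apply', conj_trivial]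
  have key := real_inner_mul_inner_self_le (hu.toLp u) (hv.toLp v)
  rw [inner_toLp hu hv, inner_toLp hu hu, inner_toLp hv hv] at key
  simpa only [sq] using key

theorem integrable_mul_and_sq_integral_mul_le_of_weight {u v w : α → ℝ} (hw : ∀ a, 0 < w a)
    (hwm : AEMeasurable w μ) (hu : AEStronglyMeasurable u μ) (hv : AEStronglyMeasurable v μ)
    (hu2 : Integrable (fun a => u a ^ 2 * w a) μ) (hv2 : Integrable (fun a => v a ^ 2 / w a) μ) :
    Integrable (fun a => u a * v a) μ ∧
      (∫ a, u a * v a ∂μ) ^ 2 ≤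
        (∫ a, u a ^ 2 * w a ∂μ) * ∫ a, v a ^ 2 / w a ∂μ := by
  have hU : MemLp (fun a => u a * √(w a)) 2 μ :=
    (memLp_two_iff_integrable_sq (hu.aemeasurable.mul hwm.sqrt).aestronglyMeasurable).2 <|
      hu2.congr <| ae_of_all _ fun a => by simp only [Pi.mul_apply, mul_pow, sq_sqrt (hw a).le]
  have hV : MemLp (fun a => v a / √(w a)) 2 μ :=
    (memLp_two_iff_integrable_sq (hv.aemeasurable.div hwm.sqrt).aestronglyMeasurable).2 <|
      hv2.congr <| ae_of_all _ fun a => by simp only [Pi.div_apply, div_pow, sq_sqrt (hw a).le]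
  have hUV : ∀ a, u a * √(w a) * (v a / √(w a)) = u a * v a := fun a => by
    field_simp [(sqrt_pos.2 (hw a)).ne']
  refine ⟨(hU.integrable_mul hV).congr (ae_of_all _ hUV), ?_⟩
  have key := sq_integral_mul_le_integral_sq_mul_integral_sq hU hV
  simp only [hUV, mul_pow, div_pow, sq_sqrt (hw _).le] at key
  exact key

theorem integral_le_mul_of_le_mul_of_lintegral_eq {h k : α → ℝ} {c C : ℝ} (hc : 0 ≤ c)
    (hC : 0 ≤ C) (hh : AEStronglyMeasurable h μ) (hh0 : ∀ a, 0 ≤ h a)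
    (hhk : ∀ a, h a ≤ c * k a) (hk : ∫⁻ a, ENNReal.ofReal (k a) ∂μ = ENNReal.ofReal C) :
    ∫ a, h a ∂μ ≤ c * C := by
  rw [integral_eq_lintegral_of_nonneg_ae (ae_of_all _ hh0) hh]
  refine ENNReal.toReal_le_of_le_ofReal (mul_nonneg hc hC) ?_
  calc ∫⁻ a, ENNReal.ofReal (h a) ∂μ
      ≤ ∫⁻ a, ENNReal.ofReal c * ENNReal.ofReal (k a) ∂μ := lintegral_mono fun a => by
        rw [← ENNReal.ofReal_mul hc]
        exact ENNReal.ofReal_le_ofReal (hhk a)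
    _ = ENNReal.ofReal (c * C) := by
        rw [lintegral_const_mul' _ _ ENNReal.ofReal_ne_top, hk, ENNReal.ofReal_mul hc]

end CauchySchwarz

section Cdf

variable {ρ Φ : ℝ → ℝ}

theorem cdf_nonneg (hρ0 : ∀ x, 0 ≤ ρ x) (hΦ : ∀ x, Φ x = ∫ t in Iic x, ρ t) (x : ℝ) :
    0 ≤ Φ x :=
  hΦ x ▸ setIntegral_nonneg measurableSet_Iic fun t _ => hρ0 t

theorem cdf_le_one (hρ0 : ∀ x, 0 ≤ ρ x) (hρint : Integrable ρ) (hρ1 : ∫ x, ρ x = 1)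
    (hΦ : ∀ x, Φ x = ∫ t in Iic x, ρ t) (x : ℝ) : Φ x ≤ 1 :=
  hΦ x ▸ hρ1 ▸ setIntegral_le_integral hρint (ae_of_all _ hρ0)

theorem cdf_monotone (hρ0 : ∀ x, 0 ≤ ρ x) (hρint : Integrable ρ)
    (hΦ : ∀ x, Φ x = ∫ t in Iic x, ρ t) : Monotone Φ := fun x y hxy => by
  rw [hΦ, hΦ]
  exact setIntegral_mono_set hρint.integrableOn (ae_of_all _ hρ0)
    (Iic_subset_Iic.2 hxy).eventuallyLE

theorem integral_Ioi_eq_one_sub_cdf (hρint : Integrable ρ) (hρ1 : ∫ x, ρ x = 1)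
    (hΦ : ∀ x, Φ x = ∫ t in Iic x, ρ t) (x : ℝ) : ∫ t in Ioi x, ρ t = 1 - Φ x := by
  have h := integral_add_compl (measurableSet_Iic (a := x)) hρint
  rw [compl_Iic, hρ1, ← hΦ] at h
  linarith

theorem integrable_cdf_mul_one_sub_cdf_div {ψ : ℝ → ℝ} (hΦ0 : ∀ t, 0 ≤ Φ t)
    (hΦ1 : ∀ t, Φ t ≤ 1) (hΦm : Measurable Φ) (hψ0 : ∀ t, 0 ≤ ψ t) (hψm : AEMeasurable ψ)
    (hleft : IntegrableOn (fun t => Φ t / ψ t) (Iic 0))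
    (hright : IntegrableOn (fun t => (1 - Φ t) / ψ t) (Ici 0)) :
    Integrable (fun t => Φ t * (1 - Φ t) / ψ t) := by
  have hm : AEStronglyMeasurable (fun t => Φ t * (1 - Φ t) / ψ t) :=
    ((hΦm.mul (measurable_const.sub hΦm)).aemeasurable.div hψm).aestronglyMeasurable
  have hnorm : ∀ t, ‖Φ t * (1 - Φ t) / ψ t‖ = Φ t * (1 - Φ t) / ψ t := fun t =>
    norm_of_nonneg (div_nonneg (mul_nonneg (hΦ0 t) (sub_nonneg.2 (hΦ1 t))) (hψ0 t))
  rw [← integrableOn_univ, ← Iic_union_Ici (a := (0 : ℝ))]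
  refine IntegrableOn.union (hleft.mono' hm.restrict (ae_of_all _ fun t => ?_))
    (hright.mono' hm.restrict (ae_of_all _ fun t => ?_))
  · rw [hnorm]
    exact div_le_div_of_nonneg_right (mul_le_of_le_one_right (hΦ0 t) (by linarith [hΦ0 t]))
      (hψ0 t)
  · rw [hnorm]
    exact div_le_div_of_nonneg_right (mul_le_of_le_one_left (sub_nonneg.2 (hΦ1 t)) (hΦ1 t))
      (hψ0 t)

end Cdf

section Kernel

noncomputable def cdfKernel (Φ : ℝ → ℝ) (x t : ℝ) : ℝ := Φ t - if x ≤ t then 1 else 0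

variable {ρ Φ ψ : ℝ → ℝ}

theorem measurable_uncurry_cdfKernel (hΦm : Measurable Φ) :
    Measurable (Function.uncurry (cdfKernel Φ)) :=
  (hΦm.comp measurable_snd).sub
    (Measurable.ite (measurableSet_le measurable_fst measurable_snd) measurable_const
      measurable_const)

theorem cdfKernel_sub_cdfKernel (Φ : ℝ → ℝ) {x y : ℝ} (hyx : y ≤ x) (t : ℝ) :
    cdfKernel Φ x t - cdfKernel Φ y t = (Ico y x).indicator 1 t := by
  simp only [cdfKernel, indicator_apply, mem_Ico, Pi.one_apply]
  split_ifs <;> grind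

theorem cdfKernel_sq_div (Φ ψ : ℝ → ℝ) (x t : ℝ) :
    cdfKernel Φ x t ^ 2 / ψ t = (Iio x).indicator (fun t => Φ t ^ 2 / ψ t) t
      + (Ici x).indicator (fun t => (1 - Φ t) ^ 2 / ψ t) t := by
  simp only [cdfKernel, indicator_apply, mem_Iio, mem_Ici]
  split_ifs <;> grind

theorem mul_cdfKernel_sq (ρ Φ : ℝ → ℝ) (x t : ℝ) :
    ρ x * cdfKernel Φ x t ^ 2 = (Iic t).indicator (fun x => ρ x * (1 - Φ t) ^ 2) x
      + (Ioi t).indicator (fun x => ρ x * Φ t ^ 2) x := by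
  simp only [cdfKernel, indicator_apply, mem_Iic, mem_Ioi]
  split_ifs <;> grind

theorem integrable_cdfKernel_sq_div (hΦ0 : ∀ t, 0 ≤ Φ t) (hΦ1 : ∀ t, Φ t ≤ 1)
    (hΦm : Measurable Φ) (hψ0 : ∀ t, 0 ≤ ψ t) (hψm : AEMeasurable ψ) {x : ℝ}
    (hleft : IntegrableOn (fun t => Φ t / ψ t) (Iic x))
    (hright : IntegrableOn (fun t => (1 - Φ t) / ψ t) (Ici x)) :
    Integrable (fun t => cdfKernel Φ x t ^ 2 / ψ t) := by
  have sq_div_le : ∀ {s : ℝ}, 0 ≤ s → s ≤ 1 → ∀ t, ‖s ^ 2 / ψ t‖ ≤ s / ψ t :=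
      fun hs0 hs1 t => by
    rw [norm_of_nonneg (by have := hψ0 t; positivity)]
    exact div_le_div_of_nonneg_right (by nlinarith) (hψ0 t)
  have hl : IntegrableOn (fun t => Φ t ^ 2 / ψ t) (Iio x) :=
    (hleft.mono_set Iio_subset_Iic_self).mono'
      ((hΦm.pow_const 2).aemeasurable.div hψm).aestronglyMeasurable.restrict
      (ae_of_all _ fun t => sq_div_le (hΦ0 t) (hΦ1 t) t)
  have hr : IntegrableOn (fun t => (1 - Φ t) ^ 2 / ψ t) (Ici x) :=
    hright.mono' (((measurable_const.sub hΦm).pow_const 2).aemeasurable.div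
      hψm).aestronglyMeasurable.restrict
      (ae_of_all _ fun t => sq_div_le (sub_nonneg.2 (hΦ1 t)) (by linarith [hΦ0 t]) t)
  simp_rw [cdfKernel_sq_div]
  exact (hl.integrable_indicator measurableSet_Iio).add (hr.integrable_indicator measurableSet_Ici)

theorem integrable_mul_cdfKernel_sq (hρint : Integrable ρ) (Φ : ℝ → ℝ) (t : ℝ) :
    Integrable (fun x => ρ x * cdfKernel Φ x t ^ 2) := by
  simp_rw [mul_cdfKernel_sq]
  exact ((hρint.mul_const _).integrableOn.integrable_indicator measurableSet_Iic).add
    ((hρint.mul_const _).integrableOn.integrable_indicator measurableSet_Ioi)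

theorem integral_mul_cdfKernel_sq (hρint : Integrable ρ) (hρ1 : ∫ x, ρ x = 1)
    (hΦ : ∀ x, Φ x = ∫ t in Iic x, ρ t) (t : ℝ) :
    ∫ x, ρ x * cdfKernel Φ x t ^ 2 = Φ t * (1 - Φ t) := by
  simp_rw [mul_cdfKernel_sq]
  rw [integral_add ((hρint.mul_const _).integrableOn.integrable_indicator measurableSet_Iic)
      ((hρint.mul_const _).integrableOn.integrable_indicator measurableSet_Ioi),
    integral_indicator measurableSet_Iic, integral_indicator measurableSet_Ioi,
    integral_mul_const, integral_mul_const, ← hΦ, integral_Ioi_eq_one_sub_cdf hρint hρ1 hΦ]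
  ring

theorem lintegral_mul_integral_cdfKernel_sq_div (hρ0 : ∀ x, 0 ≤ ρ x)
    (hρint : Integrable ρ) (hρ1 : ∫ x, ρ x = 1) (hΦ : ∀ x, Φ x = ∫ t in Iic x, ρ t)
    (hψ0 : ∀ t, 0 ≤ ψ t) (hψm : AEMeasurable ψ)
    (hint : ∀ x, Integrable fun t => cdfKernel Φ x t ^ 2 / ψ t)
    (hC : Integrable fun t => Φ t * (1 - Φ t) / ψ t) :
    ∫⁻ x, ENNReal.ofReal (ρ x * ∫ t, cdfKernel Φ x t ^ 2 / ψ t) =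
      ENNReal.ofReal (∫ t, Φ t * (1 - Φ t) / ψ t) := by
  have hnonneg : ∀ x t, 0 ≤ ρ x * (cdfKernel Φ x t ^ 2 / ψ t) := fun x t =>
    mul_nonneg (hρ0 x) (div_nonneg (sq_nonneg _) (hψ0 t))
  have hmeas : AEMeasurable (Function.uncurry fun x t =>
      ENNReal.ofReal (ρ x * (cdfKernel Φ x t ^ 2 / ψ t))) (volume.prod volume) :=
    ENNReal.measurable_ofReal.comp_aemeasurable <|
      (hρint.aemeasurable.comp_quasiMeasurePreserving Measure.quasiMeasurePreserving_fst).mul <|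
        ((measurable_uncurry_cdfKernel (cdf_monotone hρ0 hρint hΦ).measurable).pow_const
          2).aemeasurable.div <|
          hψm.comp_quasiMeasurePreserving Measure.quasiMeasurePreserving_snd
  calc ∫⁻ x, ENNReal.ofReal (ρ x * ∫ t, cdfKernel Φ x t ^ 2 / ψ t)
      = ∫⁻ x, ∫⁻ t, ENNReal.ofReal (ρ x * (cdfKernel Φ x t ^ 2 / ψ t)) :=
        lintegral_congr fun x => by
          rw [← integral_const_mul, ofReal_integral_eq_lintegral_ofReal
            ((hint x).const_mul _) (ae_of_all _ (hnonneg x))]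
    _ = ∫⁻ t, ∫⁻ x, ENNReal.ofReal (ρ x * (cdfKernel Φ x t ^ 2 / ψ t)) :=
        lintegral_lintegral_swap hmeas
    _ = ∫⁻ t, ENNReal.ofReal (Φ t * (1 - Φ t) / ψ t) :=
        lintegral_congr fun t => by
          simp_rw [← mul_div_assoc]
          rw [← ofReal_integral_eq_lintegral_ofReal
              ((integrable_mul_cdfKernel_sq hρint Φ t).div_const _)
              (ae_of_all _ fun x => div_nonneg (mul_nonneg (hρ0 x) (sq_nonneg _)) (hψ0 t)),
            integral_div, integral_mul_cdfKernel_sq hρint hρ1 hΦ]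
    _ = ENNReal.ofReal (∫ t, Φ t * (1 - Φ t) / ψ t) :=
        (ofReal_integral_eq_lintegral_ofReal hC <| ae_of_all _ fun t =>
          div_nonneg (mul_nonneg (cdf_nonneg hρ0 hΦ t)
            (sub_nonneg.2 (cdf_le_one hρ0 hρint hρ1 hΦ t))) (hψ0 t)).symm

end Kernel

section Representation

variable {Φ f f' : ℝ → ℝ}

theorem integral_mul_cdfKernel_sub (hAC : ∀ a b, f b - f a = ∫ t in a..b, f' t) {x y : ℝ}
    (hyx : y ≤ x) (hx : Integrable fun t => f' t * cdfKernel Φ x t)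
    (hy : Integrable fun t => f' t * cdfKernel Φ y t) :
    (∫ t, f' t * cdfKernel Φ x t) - ∫ t, f' t * cdfKernel Φ y t = f x - f y := by
  rw [← integral_sub hx hy, hAC y x, intervalIntegral.integral_of_le hyx,
    ← integral_Ico_eq_integral_Ioc, ← integral_indicator measurableSet_Ico]
  refine integral_congr_ae (ae_of_all _ fun t => ?_)
  simp only [← mul_sub, cdfKernel_sub_cdfKernel Φ hyx, indicator_apply, Pi.one_apply]
  split_ifs <;> simp

theorem exists_add_const_eq_integral_mul_cdfKernel
    (hAC : ∀ a b, f b - f a = ∫ t in a..b, f' t)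
    (hint : ∀ x, Integrable fun t => f' t * cdfKernel Φ x t) :
    ∃ K, ∀ x, f x + K = ∫ t, f' t * cdfKernel Φ x t := by
  refine ⟨(∫ t, f' t * cdfKernel Φ 0 t) - f 0, fun x => ?_⟩
  rcases le_total 0 x with h | h
  · linarith [integral_mul_cdfKernel_sub hAC h (hint x) (hint 0)]
  · linarith [integral_mul_cdfKernel_sub hAC h (hint 0) (hint x)]

end Representation

section Moments

variable {ρ f : ℝ → ℝ}

theorem integrable_add_const_sq_mul (hρint : Integrable ρ)
    (hfL1 : Integrable fun x => f x * ρ x) (hfL2 : Integrable fun x => f x ^ 2 * ρ x) (c : ℝ) :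
    Integrable fun x => (f x + c) ^ 2 * ρ x := by
  simp_rw [fun x => show (f x + c) ^ 2 * ρ x = f x ^ 2 * ρ x + 2 * c * (f x * ρ x) + c ^ 2 * ρ x
    by ring]
  exact (hfL2.add (hfL1.const_mul _)).add (hρint.const_mul _)

theorem integral_add_const_sq_mul (hρint : Integrable ρ) (hρ1 : ∫ x, ρ x = 1)
    (hfL1 : Integrable fun x => f x * ρ x) (hfL2 : Integrable fun x => f x ^ 2 * ρ x) (c : ℝ) :
    ∫ x, (f x + c) ^ 2 * ρ x =
      (∫ x, f x ^ 2 * ρ x) + 2 * c * (∫ x, f x * ρ x) + c ^ 2 := by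
  simp_rw [fun x => show (f x + c) ^ 2 * ρ x = f x ^ 2 * ρ x + 2 * c * (f x * ρ x) + c ^ 2 * ρ x
    by ring]
  rw [integral_add, integral_add, integral_const_mul, integral_const_mul, hρ1, mul_one]
  exacts [hfL2, hfL1.const_mul _, hfL2.add (hfL1.const_mul _), hρint.const_mul _]

theorem sq_integral_mul_le_integral_sq_mul (hρ0 : ∀ x, 0 ≤ ρ x) (hρint : Integrable ρ)
    (hρ1 : ∫ x, ρ x = 1) (hfL1 : Integrable fun x => f x * ρ x)
    (hfL2 : Integrable fun x => f x ^ 2 * ρ x) :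
    (∫ x, f x * ρ x) ^ 2 ≤ ∫ x, f x ^ 2 * ρ x := by
  have hvar : 0 ≤ ∫ x, (f x + -∫ x, f x * ρ x) ^ 2 * ρ x :=
    integral_nonneg fun x => mul_nonneg (sq_nonneg _) (hρ0 x)
  rw [integral_add_const_sq_mul hρint hρ1 hfL1 hfL2] at hvar
  nlinarith

end Moments

theorem integral_sq_mul_sub_sq_le {ρ Φ ψ f f' : ℝ → ℝ} (hρ0 : ∀ x, 0 ≤ ρ x)
    (hρint : Integrable ρ) (hρ1 : ∫ x, ρ x = 1) (hΦ : ∀ x, Φ x = ∫ t in Iic x, ρ t)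
    (hψpos : ∀ t, 0 < ψ t) (hψm : AEMeasurable ψ)
    (hstrong : ∀ c : ℝ, IntegrableOn (fun t => Φ t / ψ t) (Iic c) ∧
        IntegrableOn (fun t => (1 - Φ t) / ψ t) (Ici c))
    (hf' : AEStronglyMeasurable f') (hAC : ∀ a b : ℝ, f b - f a = ∫ t in a..b, f' t)
    (hfL1 : Integrable fun x => f x * ρ x) (hfL2 : Integrable fun x => f x ^ 2 * ρ x)
    (hf'L2 : Integrable fun x => f' x ^ 2 * ψ x) :
    (∫ x, f x ^ 2 * ρ x) - (∫ x, f x * ρ x) ^ 2 ≤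
      (∫ x, f' x ^ 2 * ψ x) * ∫ t, Φ t * (1 - Φ t) / ψ t := by
  have hΦ0 := cdf_nonneg hρ0 hΦ
  have hΦ1 := cdf_le_one hρ0 hρint hρ1 hΦ
  have hΦm : Measurable Φ := (cdf_monotone hρ0 hρint hΦ).measurable
  have hψ0 : ∀ t, 0 ≤ ψ t := fun t => (hψpos t).le
  have hJ : ∀ x, Integrable fun t => cdfKernel Φ x t ^ 2 / ψ t := fun x =>
    integrable_cdfKernel_sq_div hΦ0 hΦ1 hΦm hψ0 hψm (hstrong x).1 (hstrong x).2
  have hCS := fun x => integrable_mul_and_sq_integral_mul_le_of_weight (v := cdfKernel Φ x)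
    hψpos hψm hf'
    ((measurable_uncurry_cdfKernel hΦm).comp measurable_prodMk_left).aestronglyMeasurable
    hf'L2 (hJ x)
  obtain ⟨K, hK⟩ := exists_add_const_eq_integral_mul_cdfKernel hAC fun x => (hCS x).1
  have hC : Integrable fun t => Φ t * (1 - Φ t) / ψ t :=
    integrable_cdf_mul_one_sub_cdf_div hΦ0 hΦ1 hΦm hψ0 hψm (hstrong 0).1 (hstrong 0).2
  have hbound : ∫ x, (f x + K) ^ 2 * ρ x ≤
      (∫ x, f' x ^ 2 * ψ x) * ∫ t, Φ t * (1 - Φ t) / ψ t := by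
    refine integral_le_mul_of_le_mul_of_lintegral_eq
      (integral_nonneg fun x => mul_nonneg (sq_nonneg _) (hψ0 x))
      (integral_nonneg fun t => div_nonneg (mul_nonneg (hΦ0 t) (sub_nonneg.2 (hΦ1 t))) (hψ0 t))
      (integrable_add_const_sq_mul hρint hfL1 hfL2 K).aestronglyMeasurable
      (fun x => mul_nonneg (sq_nonneg _) (hρ0 x)) (fun x => ?_)
      (lintegral_mul_integral_cdfKernel_sq_div hρ0 hρint hρ1 hΦ hψ0 hψm hJ hC)
    rw [hK x, mul_comm (ρ x), ← mul_assoc]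
    exact mul_le_mul_of_nonneg_right (hCS x).2 (hρ0 x)
  rw [integral_add_const_sq_mul hρint hρ1 hfL1 hfL2] at hbound
  nlinarith [sq_nonneg ((∫ x, f x * ρ x) + K)]

theorem stmt14_general (ρ ψ Φ : ℝ → ℝ) (γ : ℝ) (hγ : 0 < γ)
    (hρpos : ∀ x, 0 < ρ x) (hρint : Integrable ρ) (hρ1 : ∫ x, ρ x = 1)
    (hψpos : ∀ x, 0 < ψ x)
    (hψloc : LocallyIntegrable ψ)
    (hΦ : ∀ x, Φ x = ∫ t in Iic x, ρ t)
    (hstrong : ∀ c : ℝ, IntegrableOn (fun t => Φ t / ψ t) (Iic c) ∧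
        IntegrableOn (fun t => (1 - Φ t) / ψ t) (Ici c))
    (f f' : ℝ → ℝ)
    (hf'loc : LocallyIntegrable f')
    (hAC : ∀ a b : ℝ, f b - f a = ∫ t in a..b, f' t)
    (hfL1 : Integrable (fun x => f x * ρ x))
    (hfL2 : Integrable (fun x => f x ^ 2 * ρ x))
    (hf'L2 : Integrable (fun x => f' x ^ 2 * ψ x)) :
    (∫ x, f x * ρ x) ^ 2 + (1 / γ) * (∫ x, f' x ^ 2 * ψ x)
        ≤ (∫ x, f x ^ 2 * ρ x) + (1 / γ) * (∫ x, f' x ^ 2 * ψ x) ∧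
    (∫ x, f x ^ 2 * ρ x) + (1 / γ) * (∫ x, f' x ^ 2 * ψ x)
        ≤ (1 + γ * ∫ t, Φ t * (1 - Φ t) / ψ t) *
          ((∫ x, f x * ρ x) ^ 2 + (1 / γ) * (∫ x, f' x ^ 2 * ψ x)) := by
  have hρ0 : ∀ x, 0 ≤ ρ x := fun x => (hρpos x).le
  have hmean := sq_integral_mul_le_integral_sq_mul hρ0 hρint hρ1 hfL1 hfL2
  have hvar := integral_sq_mul_sub_sq_le hρ0 hρint hρ1 hΦ hψpos
    hψloc.aestronglyMeasurable.aemeasurable hstrong hf'loc.aestronglyMeasurable hAC hfL1 hfL2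
    hf'L2
  have hC0 : 0 ≤ ∫ t, Φ t * (1 - Φ t) / ψ t := integral_nonneg fun t =>
    div_nonneg (mul_nonneg (cdf_nonneg hρ0 hΦ t)
      (sub_nonneg.2 (cdf_le_one hρ0 hρint hρ1 hΦ t))) (hψpos t).le
  refine ⟨by linarith, ?_⟩
  have hexpand : ∀ m D C : ℝ, (1 + γ * C) * (m ^ 2 + 1 / γ * D) =
      m ^ 2 + 1 / γ * D + γ * C * m ^ 2 + D * C := fun m D C => by
    field_simp
    ring
  rw [hexpand]
  nlinarith [mul_nonneg (mul_nonneg hγ.le hC0) (sq_nonneg (∫ x, f x * ρ x))]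

theorem stmt14 (ρ ψ Φ : ℝ → ℝ) (γ : ℝ) (hγ : 0 < γ)
    (hρpos : ∀ x, 0 < ρ x) (hρint : Integrable ρ) (hρ1 : ∫ x, ρ x = 1)
    (hψpos : ∀ x, 0 < ψ x)
    (hψloc : LocallyIntegrable ψ)
    (hψinvloc : LocallyIntegrable (fun x => 1 / ψ x))
    (hΦ : ∀ x, Φ x = ∫ t in Iic x, ρ t)
    (hstrong : ∀ c : ℝ, IntegrableOn (fun t => Φ t / ψ t) (Iic c) ∧
        IntegrableOn (fun t => (1 - Φ t) / ψ t) (Ici c))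
    (hC : Integrable (fun t => Φ t * (1 - Φ t) / ψ t))
    (f f' : ℝ → ℝ)
    (hf'loc : LocallyIntegrable f')
    (hAC : ∀ a b : ℝ, f b - f a = ∫ t in a..b, f' t)
    (hfL1 : Integrable (fun x => f x * ρ x))
    (hfL2 : Integrable (fun x => f x ^ 2 * ρ x))
    (hf'L2 : Integrable (fun x => f' x ^ 2 * ψ x)) :
    (∫ x, f x * ρ x) ^ 2 + (1 / γ) * (∫ x, f' x ^ 2 * ψ x)
        ≤ (∫ x, f x ^ 2 * ρ x) + (1 / γ) * (∫ x, f' x ^ 2 * ψ x) ∧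
    (∫ x, f x ^ 2 * ρ x) + (1 / γ) * (∫ x, f' x ^ 2 * ψ x)
        ≤ (1 + γ * ∫ t, Φ t * (1 - Φ t) / ψ t) *
          ((∫ x, f x * ρ x) ^ 2 + (1 / γ) * (∫ x, f' x ^ 2 * ψ x)) :=
  stmt14_general ρ ψ Φ γ hγ hρpos hρint hρ1 hψpos hψloc hΦ hstrong f f' hf'loc hAC hfL1 hfL2 hf'L2
end
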